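/- arXiv:0810.3578 — 3 statements merged into one kernel-verified Lean document; each statement's English description precedes it below -/
import Mathlib

section
/- For square k×k matrices A and B over a commutative ring, det(A+B) equals the sum over i from 0 to k and over all pairs of increasing subsequences a = (a₁<...<a_i) and b = (b₁<...<b_i) of {1,...,k}, of (−1)^{∑a_j − ∑b_j} times det(A_a^b) times det(B_{a'}^{b'}), where A_a^b is the submatrix of A with rows a and columns b, and a', b' are the complementary increasing subsequences. -/
/-!
Expanding `det (A + B)` by multilinearity in the rows gives the sum, over row sets `s`, of the
determinant of the matrix whose rows in `s` come from `A` and the others from `B`; that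
determinant is computed by the Laplace expansion along the rows `s`.

A permutation `σ` with `σ t = s` amounts to a pair of permutations of `Fin i` and `Fin m`,
read through the increasing enumerations of `t, s` and of `tᶜ, sᶜ`. The sign of `σ` is the
sign of the pair times the signs of the two shuffles listing `s` (resp. `t`) before its
complement. The shuffle of `s = {s₀ < ⋯ < s_{i-1}}` has `∑ₐ (sₐ - a)` inversions, since
exactly `sₐ - a` elements of `sᶜ` lie below `sₐ`; the terms `∑ₐ a` cancel in the product
of the signs for `s` and `t`.
-/

open Finset

open Equiv Equiv.Perm

variable {k i m : ℕ}

theorem Equiv.Perm.sign_eq_neg_one_pow_card_inversions {n : ℕ} (σ : Perm (Fin n)) :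
    sign σ = (-1) ^ #{p : Fin n × Fin n | p.1 < p.2 ∧ σ p.2 < σ p.1} := by
  have h_sign : sign σ = signAux σ := by
    refine swap_induction_on σ (by simp) fun f x y hxy ih => ?_
    rw [signAux_mul, sign_mul, ih, sign_swap hxy, signAux_swap hxy]
  rw [h_sign, signAux, prod_ite, prod_const, prod_const_one, mul_one]
  congr 1
  refine card_nbij' (fun p => (p.2, p.1)) (fun p => ⟨p.2, p.1⟩) ?_ ?_ (fun _ _ => rfl)
    (fun _ _ => rfl)
  · rintro ⟨x, y⟩ h
    simp only [coe_filter, mem_finPairsLT, mem_univ, true_and] at h ⊢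
    exact ⟨h.1, h.2.lt_of_ne (σ.injective.ne h.1.ne')⟩
  · rintro ⟨x, y⟩ h
    simp only [coe_filter, mem_finPairsLT, mem_univ, true_and] at h ⊢
    exact ⟨h.1, h.2.le⟩

theorem Finset.card_filter_orderEmbOfFin_lt {α : Type*} [LinearOrder α] (t : Finset α)
    (ht : #t = i) (x : α) :
    #{a : Fin i | t.orderEmbOfFin ht a < x} = #{y ∈ t | y < x} := by
  conv_rhs => rw [← map_orderEmbOfFin_univ t ht, filter_map, card_map]
  rfl

theorem Finset.card_filter_lt_orderEmbOfFin {α : Type*} [LinearOrder α] (t : Finset α)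
    (ht : #t = i) (a : Fin i) :
    #{y ∈ t | y < t.orderEmbOfFin ht a} = a := by
  rw [← card_filter_orderEmbOfFin_lt t ht]
  simp_rw [(t.orderEmbOfFin ht).lt_iff_lt, filter_gt_eq_Iio, Fin.card_Iio]

theorem Finset.card_filter_lt_add_card_filter_compl_lt (s : Finset (Fin k)) (x : Fin k) :
    #{y ∈ s | y < x} + #{y ∈ sᶜ | y < x} = x := by
  have := card_filter_add_card_filter_not (s := Iio x) (· ∈ s)
  rw [Fin.card_Iio] at this
  convert this using 3 <;> ext y <;> simp [and_comm]

theorem Finset.card_filter_compl_lt_orderEmbOfFin (s : Finset (Fin k)) (hs : #s = i)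
    (hs' : #sᶜ = m) (a : Fin i) :
    #{b : Fin m | sᶜ.orderEmbOfFin hs' b < s.orderEmbOfFin hs a} + a = s.orderEmbOfFin hs a := by
  rw [card_filter_orderEmbOfFin_lt, ← card_filter_lt_orderEmbOfFin s hs a, add_comm,
    card_filter_lt_add_card_filter_compl_lt]

theorem Finset.add_eq_of_card_eq_of_card_compl_eq {s : Finset (Fin k)} (hs : #s = i)
    (hs' : #sᶜ = m) : i + m = k := by
  rw [← hs, ← hs', card_add_card_compl, Fintype.card_fin]

theorem Finset.card_compl_eq_of_card_eq {α : Type*} [DecidableEq α] [Fintype α]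
    {s t : Finset α} (hst : #s = #t) (hs' : #sᶜ = m) : #tᶜ = m := by
  rw [card_compl, ← hst, ← card_compl, hs']

/-- Sends `a : Fin i` to the `a`-th element of `s` and `i + b` to the `b`-th element of `sᶜ`. -/
def Finset.shufflePerm (s : Finset (Fin k)) (hs : #s = i) (hs' : #sᶜ = m) : Perm (Fin k) :=
  (finSumFinEquiv.trans (finCongr (add_eq_of_card_eq_of_card_compl_eq hs hs'))).symm.trans
    (finSumEquivOfFinset hs hs')

theorem Finset.card_inversions_shufflePerm (s : Finset (Fin k)) (hs : #s = i) (hs' : #sᶜ = m) :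
    #{p : Fin k × Fin k | p.1 < p.2 ∧ s.shufflePerm hs hs' p.2 < s.shufflePerm hs hs' p.1} =
      ∑ a : Fin i, #{b : Fin m | sᶜ.orderEmbOfFin hs' b < s.orderEmbOfFin hs a} := by
  set e := finSumFinEquiv.trans (finCongr (add_eq_of_card_eq_of_card_compl_eq hs hs'))
  have he : ∀ z, s.shufflePerm hs hs' (e z) = finSumEquivOfFinset hs hs' z := fun z => by
    simp [shufflePerm, e]
  have hinl (a : Fin i) : (e (.inl a) : ℕ) = a := by simp [e]
  have hinr (b : Fin m) : (e (.inr b) : ℕ) = i + b := by simp [e]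
  have hll (a a' : Fin i) : e (.inl a) < e (.inl a') ↔ a < a' := by
    rw [Fin.lt_def, Fin.lt_def, hinl, hinl]
  have hrr (b b' : Fin m) : e (.inr b) < e (.inr b') ↔ b < b' := by
    rw [Fin.lt_def, Fin.lt_def, hinr, hinr, Nat.add_lt_add_iff_left]
  have hlr (a : Fin i) (b : Fin m) : e (.inl a) < e (.inr b) := by
    rw [Fin.lt_def, hinl, hinr]; omega
  have hrl (a : Fin i) (b : Fin m) : ¬ e (.inr b) < e (.inl a) := by
    rw [Fin.lt_def, hinl, hinr]; omega
  have hinv : ({p : Fin k × Fin k | p.1 < p.2 ∧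
        s.shufflePerm hs hs' p.2 < s.shufflePerm hs hs' p.1} : Finset _) =
      ({q : Fin i × Fin m | sᶜ.orderEmbOfFin hs' q.2 < s.orderEmbOfFin hs q.1} : Finset _).image
        fun q => (e (.inl q.1), e (.inr q.2)) := by
    ext ⟨x, y⟩
    obtain ⟨z, rfl⟩ := e.surjective x
    obtain ⟨w, rfl⟩ := e.surjective y
    rcases z with a | b <;> rcases w with a' | b' <;>
      simp [he, hll, hrr, hlr, hrl] <;> exact le_of_lt
  rw [hinv, card_image_of_injective _ fun q q' h => by simpa [Prod.ext_iff] using h,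
    card_filter, Fintype.sum_prod_type]
  simp only [card_filter]

theorem Finset.sign_shufflePerm (s : Finset (Fin k)) (hs : #s = i) (hs' : #sᶜ = m) :
    sign (s.shufflePerm hs hs') = (-1) ^ (∑ j ∈ s, (j : ℕ) + ∑ a : Fin i, (a : ℕ)) := by
  have hsum : ∑ j ∈ s, (j : ℕ) =
      ∑ a : Fin i, #{b : Fin m | sᶜ.orderEmbOfFin hs' b < s.orderEmbOfFin hs a} +
        ∑ a : Fin i, (a : ℕ) := by
    conv_lhs => rw [← map_orderEmbOfFin_univ s hs, sum_map]
    simp [← sum_add_distrib, card_filter_compl_lt_orderEmbOfFin]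
  rw [sign_eq_neg_one_pow_card_inversions, card_inversions_shufflePerm, hsum, add_assoc,
    ← two_mul, pow_add, pow_mul, neg_one_sq, one_pow, mul_one]

section BlockPerm

variable {α : Type*} [DecidableEq α] [Fintype α] [LinearOrder α] {s t : Finset α}

theorem Finset.finSumEquivOfFinset_mem_iff (hs : #s = i) (hs' : #sᶜ = m) (z : Fin i ⊕ Fin m) :
    finSumEquivOfFinset hs hs' z ∈ s ↔ z.isLeft := by
  cases z with
  | inl a => simp [s.orderEmbOfFin_mem hs a]
  | inr b => simpa using mem_compl.mp (sᶜ.orderEmbOfFin_mem hs' b)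

/-- Sends the `a`-th element of `t` to the `π.1 a`-th element of `s`, and the `b`-th element
of `tᶜ` to the `π.2 b`-th element of `sᶜ`. Every permutation mapping `t` onto `s` is of this
form. -/
def Finset.blockPerm (hs : #s = i) (hs' : #sᶜ = m) (ht : #t = i) (ht' : #tᶜ = m)
    (π : Perm (Fin i) × Perm (Fin m)) : Perm α :=
  ((finSumEquivOfFinset ht ht').symm.trans (sumCongrHom _ _ π)).trans (finSumEquivOfFinset hs hs')

variable (hs : #s = i) (hs' : #sᶜ = m) (ht : #t = i) (ht' : #tᶜ = m)

theorem Finset.blockPerm_finSumEquivOfFinset (π : Perm (Fin i) × Perm (Fin m))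
    (z : Fin i ⊕ Fin m) :
    blockPerm hs hs' ht ht' π (finSumEquivOfFinset ht ht' z) =
      finSumEquivOfFinset hs hs' (sumCongrHom _ _ π z) := by
  simp [blockPerm]

theorem Finset.blockPerm_mem_iff (π : Perm (Fin i) × Perm (Fin m)) (x : α) :
    blockPerm hs hs' ht ht' π x ∈ s ↔ x ∈ t := by
  obtain ⟨z, rfl⟩ := (finSumEquivOfFinset ht ht').surjective x
  rw [blockPerm_finSumEquivOfFinset, finSumEquivOfFinset_mem_iff, finSumEquivOfFinset_mem_iff]
  cases z <;> rfl

theorem Finset.blockPerm_injective : Function.Injective (blockPerm hs hs' ht ht') := by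
  intro π π' h
  refine sumCongrHom_injective (Equiv.ext fun z => (finSumEquivOfFinset hs hs').injective ?_)
  rw [← blockPerm_finSumEquivOfFinset, ← blockPerm_finSumEquivOfFinset, h]

theorem Finset.exists_blockPerm_eq {σ : Perm α} (hσ : ∀ x, σ x ∈ s ↔ x ∈ t) :
    ∃ π, blockPerm hs hs' ht ht' π = σ := by
  set τ : Perm (Fin i ⊕ Fin m) :=
    ((finSumEquivOfFinset ht ht').trans σ).trans (finSumEquivOfFinset hs hs').symm
  have hτ : Set.MapsTo τ (Set.range Sum.inl) (Set.range Sum.inl) := by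
    rintro _ ⟨a, rfl⟩
    rw [Set.range_inl, Set.mem_ofPred_eq, ← finSumEquivOfFinset_mem_iff hs hs']
    simp [τ, hσ, t.orderEmbOfFin_mem ht a]
  obtain ⟨π, hπ⟩ := mem_sumCongrHom_range_of_perm_mapsTo_inl hτ
  exact ⟨π, by ext x; simp [blockPerm, hπ, τ]⟩

theorem Finset.prod_blockPerm {R : Type*} [CommMonoid R] (M : Matrix α α R)
    (π : Perm (Fin i) × Perm (Fin m)) :
    ∏ x, M (blockPerm hs hs' ht ht' π x) x =
      (∏ a, M.submatrix (s.orderEmbOfFin hs) (t.orderEmbOfFin ht) (π.1 a) a) *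
        ∏ b, M.submatrix (sᶜ.orderEmbOfFin hs') (tᶜ.orderEmbOfFin ht') (π.2 b) b := by
  rw [← (finSumEquivOfFinset ht ht').prod_comp]
  simp_rw [blockPerm_finSumEquivOfFinset]
  simp [Fintype.prod_sum_type]

end BlockPerm

section Laplace

variable {s t : Finset (Fin k)} (hs : #s = i) (hs' : #sᶜ = m) (ht : #t = i)
  (ht' : #tᶜ = m)

theorem Finset.sign_shufflePerm_mul_sign_shufflePerm :
    sign (s.shufflePerm hs hs') * sign (t.shufflePerm ht ht') =
      (-1) ^ (∑ j ∈ s, (j : ℕ)) * (-1) ^ (∑ j ∈ t, (j : ℕ)) := by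
  rw [sign_shufflePerm, sign_shufflePerm, pow_add, pow_add, mul_mul_mul_comm,
    Int.units_mul_self, mul_one]

theorem Finset.sign_blockPerm (π : Perm (Fin i) × Perm (Fin m)) :
    sign (blockPerm hs hs' ht ht' π) =
      (-1) ^ (∑ j ∈ s, (j : ℕ)) * (-1) ^ (∑ j ∈ t, (j : ℕ)) *
        (sign π.1 * sign π.2) := by
  set e := finSumFinEquiv.trans (finCongr (add_eq_of_card_eq_of_card_compl_eq hs hs'))
  have hdecomp : blockPerm hs hs' ht ht' π =
      ((t.shufflePerm ht ht').symm.trans ((e.symm.trans (sumCongrHom _ _ π)).trans e)).trans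
        (s.shufflePerm hs hs') := by
    ext x
    simp [blockPerm, shufflePerm, e]
  rw [hdecomp, sign_trans, sign_trans, sign_symm_trans_trans, sign_symm, sumCongrHom_apply,
    sign_sumCongr, ← sign_shufflePerm_mul_sign_shufflePerm hs hs' ht ht']
  ac_rfl

theorem Finset.sum_sign_smul_prod_blockPerm {R : Type*} [CommRing R]
    (M : Matrix (Fin k) (Fin k) R) :
    ∑ π, sign (blockPerm hs hs' ht ht' π) • ∏ x, M (blockPerm hs hs' ht ht' π x) x =
      (-1) ^ (∑ j ∈ s, (j : ℕ)) * (-1) ^ (∑ j ∈ t, (j : ℕ)) *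
        (M.submatrix (s.orderEmbOfFin hs) (t.orderEmbOfFin ht)).det *
        (M.submatrix (sᶜ.orderEmbOfFin hs') (tᶜ.orderEmbOfFin ht')).det := by
  set A := M.submatrix (s.orderEmbOfFin hs) (t.orderEmbOfFin ht)
  set B := M.submatrix (sᶜ.orderEmbOfFin hs') (tᶜ.orderEmbOfFin ht')
  set ε : ℤˣ := (-1) ^ (∑ j ∈ s, (j : ℕ)) * (-1) ^ (∑ j ∈ t, (j : ℕ))
  calc ∑ π, sign (blockPerm hs hs' ht ht' π) • ∏ x, M (blockPerm hs hs' ht ht' π x) x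
      = ∑ π : Perm (Fin i) × Perm (Fin m),
          ε • ((sign π.1 • ∏ a, A (π.1 a) a) * (sign π.2 • ∏ b, B (π.2 b) b)) := by
        refine sum_congr rfl fun π _ => ?_
        rw [sign_blockPerm, prod_blockPerm, mul_smul, smul_mul_smul_comm]
    _ = ε • (A.det * B.det) := by
        rw [← smul_sum, Matrix.det_apply, Matrix.det_apply, sum_mul_sum,
          ← Fintype.sum_prod_type']
    _ = _ := by
        rw [Units.smul_def, zsmul_eq_mul]
        push_cast [ε]
        ring

theorem Matrix.det_eq_sum_det_submatrix_mul_det_submatrix_compl {R : Type*} [CommRing R]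
    (M : Matrix (Fin k) (Fin k) R) :
    M.det = ∑ t ∈ ((univ : Finset (Fin k)).powersetCard i).attach,
      (-1) ^ (∑ j ∈ s, (j : ℕ)) * (-1) ^ (∑ j ∈ t.1, (j : ℕ)) *
        (M.submatrix (s.orderEmbOfFin hs) (t.1.orderEmbOfFin (mem_powersetCard.mp t.2).2)).det *
        (M.submatrix (sᶜ.orderEmbOfFin hs') (t.1ᶜ.orderEmbOfFin
          (card_compl_eq_of_card_eq (hs.trans (mem_powersetCard.mp t.2).2.symm) hs'))).det := by
  have hcard (t : {t // t ∈ (univ : Finset (Fin k)).powersetCard i}) :=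
    (mem_powersetCard.mp t.2).2
  have hcard' (t : {t // t ∈ (univ : Finset (Fin k)).powersetCard i}) :=
    card_compl_eq_of_card_eq (hs.trans (hcard t).symm) hs'
  simp_rw [← sum_sign_smul_prod_blockPerm hs hs' (hcard _) (hcard' _)]
  rw [sum_sigma', Matrix.det_apply]
  symm
  refine sum_bij (fun p _ => blockPerm hs hs' (hcard p.1) (hcard' p.1) p.2) (fun _ _ => mem_univ _)
    ?_ ?_ (fun _ _ => rfl)
  · rintro ⟨t₁, π₁⟩ - ⟨t₂, π₂⟩ -
      (h : blockPerm _ _ _ _ π₁ = blockPerm _ _ _ _ π₂)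
    obtain rfl : t₁ = t₂ := Subtype.ext <| Finset.ext fun x => by
      rw [← blockPerm_mem_iff hs hs' (hcard t₁) (hcard' t₁) π₁, h, blockPerm_mem_iff]
    rw [blockPerm_injective hs hs' (hcard t₁) (hcard' t₁) h]
  · intro σ _
    set t₀ : Finset (Fin k) := {x | σ x ∈ s}
    have hσ : ∀ x, σ x ∈ s ↔ x ∈ t₀ := by simp [t₀]
    have ht₀ : #t₀ = i := by
      rw [← hs, ← card_map σ.toEmbedding]
      congr
      ext y
      simp [t₀]
    obtain ⟨π, hπ⟩ := exists_blockPerm_eq hs hs' ht₀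
      (card_compl_eq_of_card_eq (hs.trans ht₀.symm) hs') hσ
    exact ⟨⟨⟨t₀, mem_powersetCard.mpr ⟨subset_univ t₀, ht₀⟩⟩, π⟩, by simp, hπ⟩

end Laplace

section Piecewise

variable {n R : Type*} [DecidableEq n]

theorem Matrix.det_add_eq_sum_det_piecewise [Fintype n] [CommRing R] (A B : Matrix n n R) :
    (A + B).det = ∑ s : Finset n, (Matrix.of (s.piecewise A B)).det :=
  (detRowAlternating (n := n) (R := R)).toMultilinearMap.map_add_univ A B

variable {ι κ : Type*} (A B : Matrix n n R) {s : Finset n} {f : ι → n} (g : κ → n)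

theorem Matrix.submatrix_piecewise_of_forall_mem (hf : ∀ a, f a ∈ s) :
    (Matrix.of (s.piecewise A B)).submatrix f g = A.submatrix f g := by
  ext a b
  simp [Finset.piecewise, hf a]

theorem Matrix.submatrix_piecewise_of_forall_notMem (hf : ∀ a, f a ∉ s) :
    (Matrix.of (s.piecewise A B)).submatrix f g = B.submatrix f g := by
  ext a b
  simp [Finset.piecewise, hf a]

end Piecewise

/-- Expansion of the determinant of a sum of two k×k matrices as a signed sum, over all
pairs of equal-size increasing subsequences `s`, `t` of rows/columns, of
`det (A_s^t) * det (B_{s'}^{t'})` where primes denote complementary subsequences. -/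
theorem stmt_2 {R : Type*} [CommRing R] (k : ℕ) (A B : Matrix (Fin k) (Fin k) R) :
    (A + B).det =
      ∑ i ∈ Finset.range (k + 1),
        ∑ s ∈ ((Finset.univ : Finset (Fin k)).powersetCard i).attach,
          ∑ t ∈ ((Finset.univ : Finset (Fin k)).powersetCard i).attach,
            (-1 : R) ^ (∑ j ∈ s.1, (j : ℕ)) * (-1 : R) ^ (∑ j ∈ t.1, (j : ℕ)) *
              (A.submatrix
                (s.1.orderEmbOfFin ((Finset.mem_powersetCard.mp s.2).2))
                (t.1.orderEmbOfFin ((Finset.mem_powersetCard.mp t.2).2))).det *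
              (B.submatrix
                ((s.1ᶜ).orderEmbOfFin
                  (by rw [Finset.card_compl, (Finset.mem_powersetCard.mp s.2).2]))
                ((t.1ᶜ).orderEmbOfFin
                  (by rw [Finset.card_compl, (Finset.mem_powersetCard.mp t.2).2]))).det := by
  rw [Matrix.det_add_eq_sum_det_piecewise, ← powerset_univ, sum_powerset]
  refine sum_congr (by simp) fun i _ => ?_
  rw [← sum_attach]
  refine sum_congr rfl fun s _ => ?_
  have hs := (mem_powersetCard.mp s.2).2
  rw [Matrix.det_eq_sum_det_submatrix_mul_det_submatrix_compl hs
    (by rw [card_compl, hs] : #s.1ᶜ = Fintype.card (Fin k) - i)]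
  refine sum_congr rfl fun t _ => ?_
  rw [Matrix.submatrix_piecewise_of_forall_mem _ _ _ (s.1.orderEmbOfFin_mem hs),
    Matrix.submatrix_piecewise_of_forall_notMem _ _ _
      fun a => mem_compl.mp ((s.1ᶜ).orderEmbOfFin_mem _ a)]
end

section
/- For a partition λ with at most k parts in variables z₁,...,z_k, the Schur polynomial defined as the ratio π_λ = det(z_i^{λ_j+k−j}) / ∏_{i<j}(z_i − z_j) equals the Jacobi–Trudi determinant det(h_{λ_i + j − i})_{1≤i,j≤ℓ(λ)}, where h_m denotes the m-th complete homogeneous symmetric polynomial in z₁,...,z_k. -/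
open Finset

/-- The m-th complete homogeneous symmetric polynomial `h_m` in variables `z₁,...,z_k`
(`h₀ = 1`, `h_m = 0` for `m < 0`). -/
noncomputable def hPoly (k : ℕ) : ℤ → MvPolynomial (Fin k) ℚ :=
  fun n => if 0 ≤ n then
    ∑ d ∈ Finset.filter (fun d : Fin k → Fin (n.toNat + 1) => ∑ i, (d i : ℕ) = n.toNat)
        Finset.univ, ∏ i, MvPolynomial.X i ^ (d i : ℕ)
  else 0

/-!
Put `E_i(t) = ∏_{l ≠ i} (1 - z_l t)` and `H(t) = ∏_l 1 / (1 - z_l t) = ∑_m h_m t^m`.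
Since `E_i(t) H(t) = 1 / (1 - z_i t)` and `E_i` has degree `< k`, comparing coefficients gives
`z_i^m = ∑_{r < k} [t^r] E_i · h_{m-r}`. Hence the alternant `(z_i^{λ_j+k-1-j})` is the
transpose of the product of `(h_{λ_j+r-j})_{j,r}` and `([t^{k-1-r}] E_i)_{r,i}`. The second
factor does not depend on `λ`; at `λ = 0` the first one is unitriangular, so the determinant of
the second is the Vandermonde product. When `λ_j = 0` for `j ≥ ℓ`, the rows `j ≥ ℓ` of the first
factor are unitriangular, which cuts its determinant down to the `ℓ × ℓ` Jacobi–Trudi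
determinant.
-/

open PowerSeries Matrix

namespace JacobiTrudi

section

variable {R : Type*} [CommRing R]

noncomputable def geom (z : R) : R⟦X⟧ := mk (z ^ ·)

theorem one_sub_C_mul_X_mul_geom (z : R) : (1 - C z * X) * geom z = 1 := by
  ext (_ | n) <;> simp [geom, sub_mul, mul_assoc, pow_succ', coeff_one]

theorem coeff_prod_one_sub_C_mul_X_of_card_lt {ι : Type*} [DecidableEq ι] (s : Finset ι)
    (z : ι → R) {p : ℕ} (hp : #s < p) : coeff p (∏ l ∈ s, (1 - C (z l) * X)) = 0 := by
  induction s using Finset.induction_on generalizing p with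
  | empty => simp [coeff_one, show p ≠ 0 by omega]
  | insert a s ha ih =>
    rw [card_insert_of_notMem ha] at hp
    obtain ⟨q, rfl⟩ : ∃ q, p = q + 1 := ⟨p - 1, by omega⟩
    rw [prod_insert ha, sub_mul, one_mul, mul_assoc, map_sub, coeff_C_mul, coeff_succ_X_mul,
      ih (by omega), ih (by omega), mul_zero, sub_zero]

theorem det_of_pow_sub_eq_prod {k : ℕ} (v : Fin k → R) :
    (of fun i j : Fin k => v i ^ (k - 1 - (j : ℕ))).det =
      ∏ i : Fin k, ∏ j ∈ Ioi i, (v i - v j) := by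
  have : (of fun i j : Fin k => v i ^ (k - 1 - (j : ℕ))) = projVandermonde 1 v := by
    ext i j
    simp only [of_apply, projVandermonde_apply, Pi.one_apply, one_pow, Fin.val_rev, one_mul]
    congr 1
    omega
  simp [this, det_projVandermonde]

theorem det_eq_det_submatrix_castLE {L k : ℕ} (hLk : L ≤ k)
    (M : Matrix (Fin k) (Fin k) R)
    (hzero : ∀ i j : Fin k, L ≤ (i : ℕ) → j < i → M i j = 0)
    (hone : ∀ i : Fin k, L ≤ (i : ℕ) → M i i = 1) :
    M.det = (M.submatrix (Fin.castLE hLk) (Fin.castLE hLk)).det := by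
  set e : Fin L ⊕ Fin (k - L) ≃ Fin k := finSumFinEquiv.trans (finCongr (by omega))
  have he_inl (a : Fin L) : e (Sum.inl a) = Fin.castLE hLk a := Fin.ext (by simp [e])
  have he_inr (a : Fin (k - L)) : (e (Sum.inr a) : ℕ) = L + a := by simp [e]
  have hlow : (M.submatrix e e).toBlocks₂₁ = 0 := by
    ext a b
    exact hzero _ _ (by rw [he_inr]; omega)
      (by rw [Fin.lt_def, he_inl, Fin.val_castLE, he_inr]; omega)
  have hdiag : (M.submatrix e e).toBlocks₂₂.det = 1 := by
    rw [det_of_isUpperTriangular]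
    · exact prod_eq_one fun a _ => hone _ (by rw [he_inr]; omega)
    · intro a b hba
      have hba : (b : ℕ) < a := hba
      exact hzero _ _ (by rw [he_inr]; omega) (by rw [Fin.lt_def, he_inr, he_inr]; omega)
  rw [← det_submatrix_equiv_self e, ← fromBlocks_toBlocks (M.submatrix e e), hlow,
    det_fromBlocks_zero₂₁, hdiag, mul_one]
  congr 1

end

theorem hPoly_of_neg {k : ℕ} {n : ℤ} (hn : n < 0) : hPoly k n = 0 := by
  simp [hPoly, hn]

theorem hPoly_zero (k : ℕ) : hPoly k 0 = 1 := by
  simp [hPoly]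

theorem coeff_prod_geom_X (k m : ℕ) :
    coeff m (∏ l : Fin k, geom (MvPolynomial.X l : MvPolynomial (Fin k) ℚ)) = hPoly k m := by
  rw [coeff_prod, hPoly, if_pos (by positivity), Int.toNat_natCast]
  simp only [geom, coeff_mk]
  refine sum_bij' (fun f hf i => ⟨f i, ?_⟩) (fun d _ => Finsupp.equivFunOnFinite.symm (d ·))
    ?_ ?_ ?_ ?_ ?_
  · rw [mem_finsuppAntidiag] at hf
    exact Nat.lt_succ_of_le (hf.1 ▸ single_le_sum (fun j _ => Nat.zero_le (f j)) (mem_univ i))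
  · intro f hf
    rw [mem_finsuppAntidiag] at hf
    simpa using hf.1
  · intro d hd
    rw [mem_finsuppAntidiag]
    simpa using hd
  · intro f _; ext; simp
  · intro d _; ext; simp
  · intro f _; rfl

noncomputable def elemSeriesErase (k : ℕ) (i : Fin k) : (MvPolynomial (Fin k) ℚ)⟦X⟧ :=
  ∏ l ∈ univ.erase i, (1 - C (MvPolynomial.X l) * X)

theorem elemSeriesErase_mul_prod_geom (k : ℕ) (i : Fin k) :
    elemSeriesErase k i * ∏ l, geom (MvPolynomial.X l) = geom (MvPolynomial.X i) := by
  rw [← mul_prod_erase univ _ (mem_univ i), mul_left_comm, elemSeriesErase, ← prod_mul_distrib,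
    prod_congr rfl fun l _ => one_sub_C_mul_X_mul_geom _, prod_const_one, mul_one]

theorem X_pow_eq_sum_coeff_mul_hPoly (k : ℕ) (i : Fin k) (m : ℕ) :
    (MvPolynomial.X i : MvPolynomial (Fin k) ℚ) ^ m =
      ∑ r ∈ range k, coeff r (elemSeriesErase k i) * hPoly k (m - r) := by
  calc (MvPolynomial.X i : MvPolynomial (Fin k) ℚ) ^ m
      = coeff m (elemSeriesErase k i * ∏ l, geom (MvPolynomial.X l)) := by
        rw [elemSeriesErase_mul_prod_geom, geom, coeff_mk]
    _ = ∑ r ∈ range (m + 1), coeff r (elemSeriesErase k i) * hPoly k (m - r) := by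
        rw [coeff_mul, Nat.sum_antidiagonal_eq_sum_range_succ_mk]
        refine sum_congr rfl fun r hr => ?_
        rw [coeff_prod_geom_X, Nat.cast_sub (by simpa [Nat.lt_succ_iff] using hr)]
    _ = ∑ r ∈ range (m + 1 + k), coeff r (elemSeriesErase k i) * hPoly k (m - r) := by
        refine sum_subset (range_subset_range.2 (by omega)) fun r _ hr => ?_
        rw [hPoly_of_neg (by simp at hr; omega), mul_zero]
    _ = ∑ r ∈ range k, coeff r (elemSeriesErase k i) * hPoly k (m - r) := by
        refine (sum_subset (range_subset_range.2 (by omega)) fun r _ hr => ?_).symm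
        have := i.pos
        rw [elemSeriesErase, coeff_prod_one_sub_C_mul_X_of_card_lt _ _ (by simp at hr ⊢; omega),
          zero_mul]

noncomputable def jacobiTrudiMatrix (k : ℕ) (μ : Fin k → ℕ) :
    Matrix (Fin k) (Fin k) (MvPolynomial (Fin k) ℚ) :=
  of fun j r => hPoly k ((μ j : ℤ) + r - j)

noncomputable def elemCoeffMatrix (k : ℕ) : Matrix (Fin k) (Fin k) (MvPolynomial (Fin k) ℚ) :=
  of fun r i => coeff (k - 1 - r) (elemSeriesErase k i)

theorem det_X_pow_eq_det_mul_det (k : ℕ) (μ : Fin k → ℕ) :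
    det (of fun i j : Fin k =>
        (MvPolynomial.X i : MvPolynomial (Fin k) ℚ) ^ (μ j + (k - 1 - (j : ℕ)))) =
      (jacobiTrudiMatrix k μ).det * (elemCoeffMatrix k).det := by
  suffices h : (of fun i j : Fin k =>
      (MvPolynomial.X i : MvPolynomial (Fin k) ℚ) ^ (μ j + (k - 1 - (j : ℕ)))) =
        (jacobiTrudiMatrix k μ * elemCoeffMatrix k)ᵀ by
    rw [h, det_transpose, det_mul]
  refine Matrix.ext fun i j => ?_
  simp only [of_apply, transpose_apply, mul_apply, jacobiTrudiMatrix, elemCoeffMatrix]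
  rw [X_pow_eq_sum_coeff_mul_hPoly, ← sum_range_reflect, Fin.sum_univ_eq_sum_range
    (fun r : ℕ => hPoly k ((μ j : ℤ) + r - j) * coeff (k - 1 - r) (elemSeriesErase k i))]
  refine sum_congr rfl fun r hr => ?_
  rw [mul_comm]
  congr 2
  have := j.isLt
  have := mem_range.1 hr
  omega

theorem det_jacobiTrudiMatrix_of_eq_zero {k L : ℕ} (hLk : L ≤ k) (μ : Fin k → ℕ)
    (hμ : ∀ j : Fin k, L ≤ (j : ℕ) → μ j = 0) :
    (jacobiTrudiMatrix k μ).det =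
      det (of fun a b : Fin L =>
        hPoly k ((μ (Fin.castLE hLk a) : ℤ) + (b : ℤ) - (a : ℤ))) := by
  refine det_eq_det_submatrix_castLE hLk _ (fun i j hi hji => ?_) fun i hi => ?_
  · rw [jacobiTrudiMatrix, of_apply, hμ i hi]
    exact hPoly_of_neg (by rw [Fin.lt_def] at hji; omega)
  · rw [jacobiTrudiMatrix, of_apply, hμ i hi]
    simpa using hPoly_zero k

theorem det_elemCoeffMatrix (k : ℕ) :
    (elemCoeffMatrix k).det =
      ∏ i : Fin k, ∏ j ∈ Ioi i,
        (MvPolynomial.X i - MvPolynomial.X j : MvPolynomial (Fin k) ℚ) := by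
  have h := det_X_pow_eq_det_mul_det k 0
  rw [det_jacobiTrudiMatrix_of_eq_zero (Nat.zero_le k) 0 fun _ _ => rfl, det_fin_zero,
    one_mul] at h
  rw [← h, ← det_of_pow_sub_eq_prod]
  simp only [Pi.zero_apply, zero_add]

end JacobiTrudi

theorem stmt_10_general (k : ℕ) (L : ℕ) (hLk : L ≤ k) (lam : Fin k → ℕ)
    (hL : ∀ j : Fin k, L ≤ (j : ℕ) → lam j = 0) :
    Matrix.det (fun i j : Fin k =>
        (MvPolynomial.X i : MvPolynomial (Fin k) ℚ) ^ (lam j + (k - 1 - (j : ℕ)))) =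
      (∏ i : Fin k, ∏ j ∈ Finset.Ioi i, (MvPolynomial.X i - MvPolynomial.X j)) *
        Matrix.det (fun a b : Fin L =>
          hPoly k ((lam (Fin.castLE hLk a) : ℤ) + (b : ℤ) - (a : ℤ))) := by
  have h := JacobiTrudi.det_X_pow_eq_det_mul_det k lam
  rw [JacobiTrudi.det_elemCoeffMatrix, JacobiTrudi.det_jacobiTrudiMatrix_of_eq_zero hLk lam hL,
    mul_comm] at h
  exact h

/-- The bialternant Schur polynomial `det(z_i^{λ_j+k−j})/∏_{i<j}(z_i−z_j)` equals the
Jacobi–Trudi determinant `det(h_{λ_i+j−i})` of size `ℓ(λ)` (the number of nonzero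
parts of `λ`); stated with the Vandermonde determinant multiplied across. -/
theorem stmt_10 (k : ℕ) (L : ℕ) (hLk : L ≤ k) (lam : Fin k → ℕ)
    (hanti : ∀ i j : Fin k, i ≤ j → lam j ≤ lam i)
    (hL : ∀ j : Fin k, L ≤ (j : ℕ) → lam j = 0)
    (hLpos : ∀ j : Fin k, (j : ℕ) < L → 0 < lam j) :
    Matrix.det (fun i j : Fin k =>
        (MvPolynomial.X i : MvPolynomial (Fin k) ℚ) ^ (lam j + (k - 1 - (j : ℕ)))) =
      (∏ i : Fin k, ∏ j ∈ Finset.Ioi i, (MvPolynomial.X i - MvPolynomial.X j)) *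
        Matrix.det (fun a b : Fin L =>
          hPoly k ((lam (Fin.castLE hLk a) : ℤ) + (b : ℤ) - (a : ℤ))) :=
  stmt_10_general k L hLk lam hL
end

section
/- The following identity of formal power series in q and Laurent polynomials in t holds: ∑_{j=1}^{l} ∑_{s=0}^{j−1} ∑_{i=j}^{l} (−1)^{i−j+s} t^{−s−1} q^{(2l+1−2j+s)(s+1)} q^{i(i+1+2(k−l)) + j(j−1)} [j−1 choose s][i−1 choose i−j][l choose i] = − ∑_{i=1}^{l} (−1)^i q^{i(i+2k)} t^{−i} [l choose i], where all binomials are Gaussian binomials with quantum integer [m] = (1−q^{2m})/(1−q²). -/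
/-- Quantum integer `[m] = 1 + q² + ... + q^{2(m-1)} = (1-q^{2m})/(1-q²)`. -/
noncomputable def qInt {K : Type*} [Field K] (q : K) (m : ℕ) : K :=
  ∑ j ∈ Finset.range m, q ^ (2 * j)

/-- Quantum factorial `[m]! = [m][m-1]⋯[1]`. -/
noncomputable def qFact {K : Type*} [Field K] (q : K) (m : ℕ) : K :=
  ∏ j ∈ Finset.range m, qInt q (j + 1)

/-- Gaussian binomial coefficient `[n choose m] = [n]!/([m]![n-m]!)`. -/
noncomputable def qChoose {K : Type*} [Field K] (q : K) (n m : ℕ) : K :=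
  qFact q n / (qFact q m * qFact q (n - m))

/-!
Exchanging the order of summation puts `j` innermost, running from `s + 1` to `i`. Writing
`j = s + 1 + x`, the symmetry `[i-1 choose i-j] = [i-1 choose j-1]` and the identity
`[i-1 choose j-1][j-1 choose s] = [i-1 choose s][i-1-s choose x]` factor the summand, and the
exponent of `q` becomes `(s+1)(2l-1) + i(i+1+2(k-l)) + x(x-1)`. The inner sum is therefore a
multiple of `∑ₓ (-1)^x q^{x(x-1)} [i-1-s choose x]`, which vanishes unless `s = i - 1` because
Pascal's rule makes it telescope. The surviving terms `s = i - 1` are the right-hand side.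
-/

open Finset

section QBinomial

variable {K : Type*} [Field K] (q : K)

@[simp]
theorem qFact_zero : qFact q 0 = 1 :=
  prod_range_zero _

theorem qFact_succ (n : ℕ) : qFact q (n + 1) = qFact q n * qInt q (n + 1) :=
  prod_range_succ _ _

theorem qInt_add (m n : ℕ) : qInt q (m + n) = qInt q m + q ^ (2 * m) * qInt q n := by
  simp only [qInt, sum_range_add, mul_sum, ← pow_add, mul_add]

variable {q}

theorem qInt_succ_ne_zero (hq : ∀ n, qFact q n ≠ 0) (n : ℕ) : qInt q (n + 1) ≠ 0 :=
  right_ne_zero_of_mul (qFact_succ q n ▸ hq (n + 1))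

theorem qChoose_zero_right (hq : ∀ n, qFact q n ≠ 0) (n : ℕ) : qChoose q n 0 = 1 := by
  simp [qChoose, hq n]

theorem qChoose_self (hq : ∀ n, qFact q n ≠ 0) (n : ℕ) : qChoose q n n = 1 := by
  simp [qChoose, hq n]

theorem qChoose_symm {m n : ℕ} (h : m ≤ n) : qChoose q n (n - m) = qChoose q n m := by
  rw [qChoose, qChoose, Nat.sub_sub_self h, mul_comm]

theorem qChoose_succ_succ (hq : ∀ n, qFact q n ≠ 0) {m n : ℕ} (h : m < n) :
    qChoose q (n + 1) (m + 1) = qChoose q n m + q ^ (2 * (m + 1)) * qChoose q n (m + 1) := by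
  obtain ⟨d, rfl⟩ := Nat.exists_eq_add_of_lt h
  have hsplit : qInt q (m + d + 1 + 1) = qInt q (m + 1) + q ^ (2 * (m + 1)) * qInt q (d + 1) := by
    rw [show m + d + 1 + 1 = (m + 1) + (d + 1) by omega, qInt_add]
  simp only [qChoose, show m + d + 1 + 1 - (m + 1) = d + 1 by omega,
    show m + d + 1 - m = d + 1 by omega, show m + d + 1 - (m + 1) = d by omega,
    qFact_succ q (m + d + 1), qFact_succ q d, qFact_succ q m, hsplit]
  have := hq m; have := hq d; have := hq (m + d + 1)
  have := qInt_succ_ne_zero hq m; have := qInt_succ_ne_zero hq d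
  field_simp

theorem qChoose_mul_qChoose (hq : ∀ n, qFact q n ≠ 0) {s m n : ℕ} (hs : s ≤ m) (hm : m ≤ n) :
    qChoose q n m * qChoose q m s = qChoose q n s * qChoose q (n - s) (m - s) := by
  have := hq m; have := hq s; have := hq (n - m); have := hq (m - s); have := hq (n - s)
  rw [qChoose, qChoose, qChoose, qChoose, show n - s - (m - s) = n - m by omega]
  field_simp

theorem sum_range_neg_one_pow_mul_qChoose (hq : ∀ n, qFact q n ≠ 0) (n : ℕ) :
    ∑ x ∈ range (n + 2), (-1) ^ x * q ^ (x * (x - 1)) * qChoose q (n + 1) x = 0 := by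
  set g : ℕ → K := fun y => (-1) ^ y * q ^ (y * (y + 1)) * qChoose q n y
  have hmid : ∀ x ∈ range n,
      (-1) ^ (x + 1) * q ^ ((x + 1) * (x + 1 - 1)) * qChoose q (n + 1) (x + 1) =
        g (x + 1) - g x := by
    intro x hx
    rw [qChoose_succ_succ hq (mem_range.1 hx)]
    simp only [g, Nat.add_sub_cancel, pow_add, pow_succ,
      show (x + 1) * (x + 1 + 1) = (x + 1) * x + 2 * (x + 1) by ring]
    ring
  rw [sum_range_succ, sum_range_succ', sum_congr rfl hmid, sum_range_sub]
  simp only [g, qChoose_self hq, qChoose_zero_right hq, Nat.add_sub_cancel, pow_succ]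
  ring

end QBinomial

theorem sum_Icc_range_Icc_comm {M : Type*} [AddCommMonoid M] (l : ℕ) (f : ℕ → ℕ → ℕ → M) :
    ∑ j ∈ Icc 1 l, ∑ s ∈ range j, ∑ i ∈ Icc j l, f j s i =
      ∑ i ∈ Icc 1 l, ∑ s ∈ range i, ∑ j ∈ Icc (s + 1) i, f j s i :=
  calc _ = ∑ j ∈ Icc 1 l, ∑ i ∈ Icc j l, ∑ s ∈ range j, f j s i :=
        sum_congr rfl fun _ _ => sum_comm
    _ = ∑ i ∈ Icc 1 l, ∑ j ∈ Icc 1 i, ∑ s ∈ range j, f j s i :=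
        sum_comm' fun _ _ => by simp only [mem_Icc]; omega
    _ = _ := sum_congr rfl fun _ _ => sum_comm' fun _ _ => by simp only [mem_Icc, mem_range]; omega

section TripleSum

variable {K : Type*} [Field K] (q u : K) (k l : ℕ)

noncomputable def tripleSummand (j s i : ℕ) : K :=
  (-1) ^ (i - j + s) * u ^ (s + 1) * q ^ ((2 * l + 1 - 2 * j + s) * (s + 1)) *
    q ^ (i * (i + 1 + 2 * (k - l)) + j * (j - 1)) *
    qChoose q (j - 1) s * qChoose q (i - 1) (i - j) * qChoose q l i

theorem sum_Icc_tripleSummand (hq : ∀ n, qFact q n ≠ 0) {s i : ℕ} (hsi : s < i) (hil : i ≤ l) :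
    ∑ j ∈ Icc (s + 1) i, tripleSummand q u k l j s i =
      (-1) ^ (i - 1) * u ^ (s + 1) * q ^ ((s + 1) * (2 * l - 1) + i * (i + 1 + 2 * (k - l))) *
        qChoose q (i - 1) s * qChoose q l i *
        ∑ x ∈ range (i - s), (-1) ^ x * q ^ (x * (x - 1)) * qChoose q (i - 1 - s) x := by
  rw [← Ico_add_one_right_eq_Icc, sum_Ico_eq_sum_range, show i + 1 - (s + 1) = i - s by omega,
    mul_sum]
  refine sum_congr rfl fun x hx => ?_
  have hxi : s + x + 1 ≤ i := by rw [mem_range] at hx; omega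
  have hsign : (-1 : K) ^ (i - (s + 1 + x) + s) = (-1) ^ (i - 1) * (-1) ^ x := by
    rw [show i - 1 = i - (s + 1 + x) + s + x by omega, pow_add _ (i - (s + 1 + x) + s) x,
      mul_assoc, ← mul_pow, neg_one_mul, neg_neg, one_pow, mul_one]
  have hchoose : qChoose q (i - 1) (i - (s + 1 + x)) * qChoose q (s + 1 + x - 1) s =
      qChoose q (i - 1) s * qChoose q (i - 1 - s) x := by
    rw [show i - (s + 1 + x) = i - 1 - (s + x) by omega, qChoose_symm (by omega),
      show s + 1 + x - 1 = s + x by omega, qChoose_mul_qChoose hq (by omega) (by omega),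
      Nat.add_sub_cancel_left]
  have hpow : q ^ ((2 * l + 1 - 2 * (s + 1 + x) + s) * (s + 1)) *
      q ^ (i * (i + 1 + 2 * (k - l)) + (s + 1 + x) * (s + 1 + x - 1)) =
      q ^ ((s + 1) * (2 * l - 1) + i * (i + 1 + 2 * (k - l))) * q ^ (x * (x - 1)) := by
    obtain ⟨r, hr⟩ := Nat.exists_eq_add_of_le (hxi.trans hil)
    rw [← pow_add, ← pow_add, show 2 * l + 1 - 2 * (s + 1 + x) + s = 2 * r + 1 + s by omega,
      show 2 * l - 1 = 2 * (s + x + r) + 1 by omega]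
    congr 1
    rcases x with _ | x
    · simp only [Nat.add_zero, Nat.add_sub_cancel, Nat.zero_sub]; ring
    · rw [show s + 1 + (x + 1) - 1 = s + 1 + x by omega, Nat.add_sub_cancel]; ring
  simp only [tripleSummand]
  rw [hsign]
  linear_combination ((-1) ^ (i - 1) * (-1) ^ x * u ^ (s + 1) * qChoose q l i) *
    (qChoose q (i - 1) (i - (s + 1 + x)) * qChoose q (s + 1 + x - 1) s * hpow +
      q ^ ((s + 1) * (2 * l - 1) + i * (i + 1 + 2 * (k - l))) * q ^ (x * (x - 1)) * hchoose)

theorem sum_tripleSummand (hq : ∀ n, qFact q n ≠ 0) (hkl : l ≤ k) :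
    ∑ j ∈ Icc 1 l, ∑ s ∈ range j, ∑ i ∈ Icc j l, tripleSummand q u k l j s i =
      -∑ i ∈ Icc 1 l, (-1) ^ i * q ^ (i * (i + 2 * k)) * u ^ i * qChoose q l i := by
  rw [sum_Icc_range_Icc_comm, ← sum_neg_distrib]
  refine sum_congr rfl fun i hi => ?_
  obtain ⟨hi1, hil⟩ := mem_Icc.1 hi
  rw [sum_eq_single (i - 1) ?_ (by simp only [mem_range]; omega),
    sum_Icc_tripleSummand q u k l hq (by omega) hil, show i - (i - 1) = 1 by omega,
    sum_range_one, Nat.sub_self, qChoose_self hq, qChoose_self hq,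
    show i - 1 + 1 = i by omega,
    show i * (2 * l - 1) + i * (i + 1 + 2 * (k - l)) = i * (i + 2 * k) by
      zify [show 1 ≤ 2 * l by omega, hkl]; ring]
  · rw [show (-1 : K) ^ i = -(-1) ^ (i - 1) by
      rw [← neg_one_mul ((-1 : K) ^ (i - 1)), ← pow_succ', Nat.sub_add_cancel hi1]]
    ring
  · intro s hs hne
    rw [mem_range] at hs
    rw [sum_Icc_tripleSummand q u k l hq hs hil, show i - s = i - s - 2 + 2 by omega,
      show i - 1 - s = i - s - 2 + 1 by omega, sum_range_neg_one_pow_mul_qChoose hq, mul_zero]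

end TripleSum

theorem qFact_C_X_ne_zero (n : ℕ) : qFact (RatFunc.C (RatFunc.X : RatFunc ℚ)) n ≠ 0 := by
  refine prod_ne_zero_iff.2 fun m _ => ?_
  have hpoly : (∑ j ∈ range (m + 1), (Polynomial.X : Polynomial ℚ) ^ (2 * j)) ≠ 0 := by
    intro h
    exact Nat.cast_add_one_ne_zero (R := ℚ) m
      (by simpa [Polynomial.eval_finsetSum] using congrArg (Polynomial.eval 1) h)
  have hmap : qInt (RatFunc.C (RatFunc.X : RatFunc ℚ)) (m + 1) =
      RatFunc.C (algebraMap (Polynomial ℚ) (RatFunc ℚ)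
        (∑ j ∈ range (m + 1), Polynomial.X ^ (2 * j))) := by
    simp [qInt, map_sum, RatFunc.algebraMap_X]
  rw [hmap]
  exact (map_ne_zero _).2 ((map_ne_zero_iff _ (IsFractionRing.injective (Polynomial ℚ) _)).2 hpoly)

theorem stmt_17_general (k l : ℕ) (hkl : l ≤ k) :
    let q : RatFunc (RatFunc ℚ) := RatFunc.C RatFunc.X
    let t : RatFunc (RatFunc ℚ) := RatFunc.X
    ∑ j ∈ Finset.Icc 1 l, ∑ s ∈ Finset.range j, ∑ i ∈ Finset.Icc j l,
        (-1 : RatFunc (RatFunc ℚ)) ^ (i - j + s) * (t⁻¹) ^ (s + 1) *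
          q ^ ((2 * l + 1 - 2 * j + s) * (s + 1)) *
          q ^ (i * (i + 1 + 2 * (k - l)) + j * (j - 1)) *
          qChoose q (j - 1) s * qChoose q (i - 1) (i - j) * qChoose q l i =
      -∑ i ∈ Finset.Icc 1 l,
        (-1 : RatFunc (RatFunc ℚ)) ^ i * q ^ (i * (i + 2 * k)) * (t⁻¹) ^ i *
          qChoose q l i :=
  sum_tripleSummand _ _ k l qFact_C_X_ne_zero hkl

/-- The triple-sum collapse identity:
∑_{j=1}^{l} ∑_{s=0}^{j−1} ∑_{i=j}^{l} (−1)^{i−j+s} t^{−s−1} q^{(2l+1−2j+s)(s+1)}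
q^{i(i+1+2(k−l))+j(j−1)} [j−1 choose s][i−1 choose i−j][l choose i]
= −∑_{i=1}^{l} (−1)^i q^{i(i+2k)} t^{−i} [l choose i]. -/
theorem stmt_17 (k l : ℕ) (hl : 1 ≤ l) (hkl : l ≤ k) :
    let q : RatFunc (RatFunc ℚ) := RatFunc.C RatFunc.X
    let t : RatFunc (RatFunc ℚ) := RatFunc.X
    ∑ j ∈ Finset.Icc 1 l, ∑ s ∈ Finset.range j, ∑ i ∈ Finset.Icc j l,
        (-1 : RatFunc (RatFunc ℚ)) ^ (i - j + s) * (t⁻¹) ^ (s + 1) *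
          q ^ ((2 * l + 1 - 2 * j + s) * (s + 1)) *
          q ^ (i * (i + 1 + 2 * (k - l)) + j * (j - 1)) *
          qChoose q (j - 1) s * qChoose q (i - 1) (i - j) * qChoose q l i =
      -∑ i ∈ Finset.Icc 1 l,
        (-1 : RatFunc (RatFunc ℚ)) ^ i * q ^ (i * (i + 2 * k)) * (t⁻¹) ^ i *
          qChoose q l i :=
  stmt_17_general k l hkl
end
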